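/- Let r be a prime power, m = 3, q = r³. Suppose a₀, a₁, a₂ ∈ F_q, f₀, f₁, f₂ ∈ F_r[X] are q-linearized, and z in the algebraic closure of F_r satisfies a₀f₀(z) + a₁f₁(z)^r + a₂f₂(z)^{r²} = 0. Then N_{q/r}(a₀)(f₀∘f₀∘f₀)(z) + N_{q/r}(a₁)(f₁∘f₁∘f₁)(z^{q}) + N_{q/r}(a₂)(f₂∘f₂∘f₂)(z^{q²}) − Tr_{q/r}(a₀a₁^r a₂^{r²})(f₀∘f₁∘f₂)(z^{q}) = 0, where the exponent of z in the last term corresponds to q^{(0+1+2)/3} = q. -/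

import Mathlib

/-!
Since the coefficients of the `fᵢ` lie in `F_r`, raising the hypothesis to the powers `r ^ j`
gives the relations `∑ᵢ aᵢ ^ r ^ j * fᵢ(z ^ r ^ (i + j)) = 0`, and `aᵢ ^ r ^ 3 = aᵢ`, so the
coefficients only run through `aᵢ, aᵢ ^ r, aᵢ ^ r ^ 2`. The maps `x ↦ fᵢ(x)` are pairwise
commuting `F_q`-linear endomorphisms of `Ω`, so the relations for `j = 0, …, 4` live in a module
over a commutative ring of operators, and there the claimed identity is a combination of them with
quadratic operator coefficients, eliminating `z ^ r, z ^ r ^ 2, z ^ r ^ 4, z ^ r ^ 5`.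
-/

open Polynomial Finset

theorem pow_pow_eq_self {M : Type*} [Monoid M] {a : M} {q : ℕ} (h : a ^ q = a) (i : ℕ) :
    a ^ q ^ i = a := by
  simpa [pow_iterate] using (Function.IsFixedPt.iterate (f := (· ^ q)) h i).eq

theorem Subfield.pow_card_eq_self {F : Type*} [Field F] (K : Subfield F) [Fintype K] {a : F}
    (ha : a ∈ K) : a ^ Fintype.card K = a :=
  congrArg ((↑) : K → F) (FiniteField.pow_card (⟨a, ha⟩ : K))

theorem Subfield.exists_expChar_card_eq_pow {F : Type*} [Field F] (K : Subfield F) [Fintype K] :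
    ∃ p n : ℕ, ExpChar F p ∧ Fintype.card K = p ^ n := by
  have := ringChar.charP K
  obtain ⟨n, hp, hcard⟩ := FiniteField.card K (ringChar K)
  have := ExpChar.prime (R := K) hp
  exact ⟨ringChar K, n, expChar_of_injective_ringHom K.subtype.injective _, hcard⟩

theorem norm_relation_of_shifted_relations {R A M : Type*} [CommRing R] [CommRing A]
    [Algebra R A] [AddCommGroup M] [Module R M] [Module A M] [IsScalarTower R A M]
    (α₀ α₁ α₂ β₀ β₁ β₂ γ₀ γ₁ γ₂ : R) (F₀ F₁ F₂ : A) (u : ℕ → M)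
    (h₀ : α₀ • F₀ • u 0 + α₁ • F₁ • u 1 + α₂ • F₂ • u 2 = 0)
    (h₁ : β₀ • F₀ • u 1 + β₁ • F₁ • u 2 + β₂ • F₂ • u 3 = 0)
    (h₂ : γ₀ • F₀ • u 2 + γ₁ • F₁ • u 3 + γ₂ • F₂ • u 4 = 0)
    (h₃ : α₀ • F₀ • u 3 + α₁ • F₁ • u 4 + α₂ • F₂ • u 5 = 0)
    (h₄ : β₀ • F₀ • u 4 + β₁ • F₁ • u 5 + β₂ • F₂ • u 6 = 0) :
    (α₀ * β₀ * γ₀) • F₀ • F₀ • F₀ • u 0 + (α₁ * β₁ * γ₁) • F₁ • F₁ • F₁ • u 3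
      + (α₂ * β₂ * γ₂) • F₂ • F₂ • F₂ • u 6
      - (α₀ * β₁ * γ₂ + β₀ * γ₁ * α₂ + γ₀ * α₁ * β₂) • F₀ • F₁ • F₂ • u 3 = 0 := by
  linear_combination (norm := module) (algebraMap R A (β₀ * γ₀) * F₀ ^ 2) • h₀
    - (algebraMap R A (γ₀ * α₁) * F₀ * F₁) • h₁
    + (algebraMap R A (α₁ * β₁) * F₁ ^ 2 - algebraMap R A (β₀ * α₂) * F₀ * F₂) • h₂
    - (algebraMap R A (β₁ * γ₂) * F₁ * F₂) • h₃ + (algebraMap R A (α₂ * γ₂) * F₂ ^ 2) • h₄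

open scoped IsMulCommutative in
theorem Module.End.norm_relation_of_shifted_relations {R M : Type*} [CommRing R]
    [AddCommGroup M] [Module R M] {F₀ F₁ F₂ : Module.End R M}
    (h₀₁ : Commute F₀ F₁) (h₀₂ : Commute F₀ F₂) (h₁₂ : Commute F₁ F₂)
    (α₀ α₁ α₂ β₀ β₁ β₂ γ₀ γ₁ γ₂ : R) (u : ℕ → M)
    (h₀ : α₀ • F₀ (u 0) + α₁ • F₁ (u 1) + α₂ • F₂ (u 2) = 0)
    (h₁ : β₀ • F₀ (u 1) + β₁ • F₁ (u 2) + β₂ • F₂ (u 3) = 0)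
    (h₂ : γ₀ • F₀ (u 2) + γ₁ • F₁ (u 3) + γ₂ • F₂ (u 4) = 0)
    (h₃ : α₀ • F₀ (u 3) + α₁ • F₁ (u 4) + α₂ • F₂ (u 5) = 0)
    (h₄ : β₀ • F₀ (u 4) + β₁ • F₁ (u 5) + β₂ • F₂ (u 6) = 0) :
    (α₀ * β₀ * γ₀) • F₀ (F₀ (F₀ (u 0))) + (α₁ * β₁ * γ₁) • F₁ (F₁ (F₁ (u 3)))
      + (α₂ * β₂ * γ₂) • F₂ (F₂ (F₂ (u 6)))
      - (α₀ * β₁ * γ₂ + β₀ * γ₁ * α₂ + γ₀ * α₁ * β₂) • F₀ (F₁ (F₂ (u 3))) = 0 := by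
  have hcomm : ∀ F ∈ ({F₀, F₁, F₂} : Set (Module.End R M)), ∀ G ∈ ({F₀, F₁, F₂} : Set _),
      F * G = G * F := by
    simp only [Set.mem_insert_iff, Set.mem_singleton_iff]
    rintro _ (rfl | rfl | rfl) _ (rfl | rfl | rfl)
    exacts [rfl, h₀₁.eq, h₀₂.eq, h₀₁.eq.symm, rfl, h₁₂.eq, h₀₂.eq.symm, h₁₂.eq.symm, rfl]
  have := Algebra.isMulCommutative_adjoin R hcomm
  exact _root_.norm_relation_of_shifted_relations (A := Algebra.adjoin R {F₀, F₁, F₂})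
    α₀ α₁ α₂ β₀ β₁ β₂ γ₀ γ₁ γ₂ ⟨F₀, Algebra.subset_adjoin (by simp)⟩
    ⟨F₁, Algebra.subset_adjoin (by simp)⟩ ⟨F₂, Algebra.subset_adjoin (by simp)⟩ u h₀ h₁ h₂ h₃ h₄

section Linearized

variable {R : Type*} [CommRing R]

def IsLinearized (S : Set R) (q : ℕ) (f : R[X]) : Prop :=
  ∃ (n : ℕ) (c : ℕ → R), (∀ i, c i ∈ S) ∧ f = ∑ i ∈ range n, C (c i) * X ^ q ^ i

namespace IsLinearized

variable {S : Set R} {q : ℕ} {f g : R[X]}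

theorem exists_eval_eq (hf : IsLinearized S q f) :
    ∃ (n : ℕ) (c : ℕ → R), (∀ i, c i ∈ S) ∧ ∀ x, f.eval x = ∑ i ∈ range n, c i * x ^ q ^ i := by
  obtain ⟨n, c, hc, rfl⟩ := hf
  exact ⟨n, c, hc, fun x => by simp [eval_finsetSum]⟩

theorem eval_mul (hf : IsLinearized S q f) {a : R} (ha : a ^ q = a) (x : R) :
    f.eval (a * x) = a * f.eval x := by
  obtain ⟨n, c, -, hf⟩ := hf.exists_eval_eq
  simp only [hf, mul_sum, mul_pow, pow_pow_eq_self ha]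
  exact sum_congr rfl fun i _ => mul_left_comm _ _ _

variable {p : ℕ} [ExpChar R p]

theorem eval_add {e : ℕ} (hq : q = p ^ e) (hf : IsLinearized S q f) (x y : R) :
    f.eval (x + y) = f.eval x + f.eval y := by
  obtain ⟨n, c, -, hf⟩ := hf.exists_eval_eq
  simp only [hf, ← sum_add_distrib, ← mul_add, hq, ← pow_mul, add_pow_expChar_pow]

theorem eval_pow {m s : ℕ} (hs : s = p ^ m) (hS : ∀ c ∈ S, c ^ s = c) (hf : IsLinearized S q f)
    (x : R) : f.eval x ^ s = f.eval (x ^ s) := by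
  obtain ⟨n, c, hc, hf⟩ := hf.exists_eval_eq
  simp only [hf, hs, sum_pow_char_pow, mul_pow]
  refine sum_congr rfl fun i _ => ?_
  rw [← hs, hS _ (hc i), pow_right_comm]

theorem eval_eval_comm {e : ℕ} (hq : q = p ^ e) (hS : ∀ c ∈ S, c ^ q = c)
    (hf : IsLinearized S q f) (hg : IsLinearized S q g) (x : R) :
    f.eval (g.eval x) = g.eval (f.eval x) := by
  obtain ⟨n, c, hc, hf⟩ := hf.exists_eval_eq
  have hqi (i : ℕ) : q ^ i = p ^ (e * i) := by rw [hq, pow_mul]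
  calc f.eval (g.eval x) = ∑ i ∈ range n, c i * g.eval x ^ q ^ i := hf _
    _ = ∑ i ∈ range n, g.eval (c i * x ^ q ^ i) := sum_congr rfl fun i _ => by
        rw [hg.eval_mul (hS _ (hc i)), hg.eval_pow (hqi i) fun c hc => pow_pow_eq_self (hS c hc) i]
    _ = g.eval (∑ i ∈ range n, c i * x ^ q ^ i) :=
        (map_sum (AddMonoidHom.mk' g.eval (hg.eval_add hq)) _ _).symm
    _ = g.eval (f.eval x) := by rw [hf]

theorem relation_pow {m s : ℕ} (hs : s = p ^ m) (hS : ∀ c ∈ S, c ^ s = c) {f₀ f₁ f₂ : R[X]}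
    (hf₀ : IsLinearized S q f₀) (hf₁ : IsLinearized S q f₁) (hf₂ : IsLinearized S q f₂)
    {a₀ a₁ a₂ z : R} (hz : a₀ * f₀.eval z + a₁ * f₁.eval z ^ s + a₂ * f₂.eval z ^ s ^ 2 = 0)
    (j : ℕ) :
    a₀ ^ s ^ j * f₀.eval (z ^ s ^ j) + a₁ ^ s ^ j * f₁.eval (z ^ s ^ (j + 1))
      + a₂ ^ s ^ j * f₂.eval (z ^ s ^ (j + 2)) = 0 := by
  have hsi (i : ℕ) : s ^ i = p ^ (m * i) := by rw [hs, pow_mul]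
  have hfrob {f : R[X]} (hf : IsLinearized S q f) (i : ℕ) :
      f.eval z ^ s ^ i = f.eval (z ^ s ^ i) :=
    hf.eval_pow (hsi i) (fun c hc => pow_pow_eq_self (hS c hc) i) z
  rw [← hfrob hf₀, ← hfrob hf₁, ← hfrob hf₂]
  calc _ = (a₀ * f₀.eval z + a₁ * f₁.eval z ^ s + a₂ * f₂.eval z ^ s ^ 2) ^ s ^ j := by
        rw [hsi j, add_pow_expChar_pow, add_pow_expChar_pow, ← hsi j]
        ring
    _ = 0 := by rw [hz, zero_pow (pow_pos (hs ▸ expChar_pow_pos R p m) j).ne']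

end IsLinearized

end Linearized

namespace IsLinearized

variable {F : Type*} [Field F] {S : Set F} {q p e : ℕ} [ExpChar F p] {f g : F[X]}

@[simps]
def toLinearMap (hq : q = p ^ e) (L : Subfield F) (hL : ∀ a ∈ L, a ^ q = a)
    (hf : IsLinearized S q f) : Module.End L F where
  toFun := f.eval
  map_add' := hf.eval_add hq
  map_smul' a := hf.eval_mul (hL a a.2)

theorem commute_toLinearMap (hq : q = p ^ e) (L : Subfield F) (hL : ∀ a ∈ L, a ^ q = a)
    (hS : ∀ c ∈ S, c ^ q = c) (hf : IsLinearized S q f) (hg : IsLinearized S q g) :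
    Commute (hf.toLinearMap hq L hL) (hg.toLinearMap hq L hL) :=
  LinearMap.ext (hf.eval_eval_comm hq hS hg)

theorem norm_relation {n r : ℕ} (hr : r = p ^ n) (hS : ∀ c ∈ S, c ^ r = c)
    {a₀ a₁ a₂ : F} (ha₀ : a₀ ^ r ^ 3 = a₀) (ha₁ : a₁ ^ r ^ 3 = a₁) (ha₂ : a₂ ^ r ^ 3 = a₂)
    {f₀ f₁ f₂ : F[X]} (hf₀ : IsLinearized S (r ^ 3) f₀) (hf₁ : IsLinearized S (r ^ 3) f₁)
    (hf₂ : IsLinearized S (r ^ 3) f₂) {z : F}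
    (hz : a₀ * f₀.eval z + a₁ * (f₁.eval z) ^ r + a₂ * (f₂.eval z) ^ r ^ 2 = 0) :
    a₀ ^ (1 + r + r ^ 2) * ((f₀.comp f₀).comp f₀).eval z +
      a₁ ^ (1 + r + r ^ 2) * ((f₁.comp f₁).comp f₁).eval (z ^ r ^ 3) +
      a₂ ^ (1 + r + r ^ 2) * ((f₂.comp f₂).comp f₂).eval (z ^ (r ^ 3) ^ 2) -
      (a₀ * a₁ ^ r * a₂ ^ r ^ 2 + (a₀ * a₁ ^ r * a₂ ^ r ^ 2) ^ r +
          (a₀ * a₁ ^ r * a₂ ^ r ^ 2) ^ r ^ 2) *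
        ((f₀.comp f₁).comp f₂).eval (z ^ r ^ 3) = 0 := by
  have hq : r ^ 3 = p ^ (n * 3) := by rw [hr, pow_mul]
  let L := (iterateFrobenius F p (n * 3)).eqLocusField (RingHom.id F)
  have mem_L (a : F) : a ∈ L ↔ a ^ r ^ 3 = a := by rw [hq]; rfl
  have hL : ∀ a ∈ L, a ^ r ^ 3 = a := fun a => (mem_L a).1
  have hL₄ (a : F) (ha : a ∈ L) : a ^ r ^ 4 = a ^ r := by rw [pow_succ, pow_mul, hL a ha]
  have hSq : ∀ c ∈ S, c ^ r ^ 3 = c := fun c hc => pow_pow_eq_self (hS c hc) 3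
  have E := relation_pow hr hS hf₀ hf₁ hf₂ hz
  lift a₀ to L using (mem_L a₀).2 ha₀
  lift a₁ to L using (mem_L a₁).2 ha₁
  lift a₂ to L using (mem_L a₂).2 ha₂
  have key := Module.End.norm_relation_of_shifted_relations
    (hf₀.commute_toLinearMap hq L hL hSq hf₁) (hf₀.commute_toLinearMap hq L hL hSq hf₂)
    (hf₁.commute_toLinearMap hq L hL hSq hf₂) a₀ a₁ a₂ (a₀ ^ r) (a₁ ^ r) (a₂ ^ r)
    (a₀ ^ r ^ 2) (a₁ ^ r ^ 2) (a₂ ^ r ^ 2) (fun j => z ^ r ^ j)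
    (by simpa [Subfield.smul_def] using E 0) (by simpa [Subfield.smul_def] using E 1)
    (by simpa [Subfield.smul_def] using E 2)
    (by simpa [Subfield.smul_def, hL _ a₀.2, hL _ a₁.2, hL _ a₂.2] using E 3)
    (by simpa [Subfield.smul_def, hL₄ _ a₀.2, hL₄ _ a₁.2, hL₄ _ a₂.2] using E 4)
  have hb₁ : ((a₀ * a₁ ^ r * a₂ ^ r ^ 2) ^ r : F) = a₀ ^ r * a₁ ^ r ^ 2 * a₂ := by
    conv_rhs => rw [← hL _ a₂.2]
    ring
  have hb₂ : ((a₀ * a₁ ^ r * a₂ ^ r ^ 2) ^ r ^ 2 : F) = a₀ ^ r ^ 2 * a₁ * a₂ ^ r := by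
    conv_rhs => rw [← hL _ a₁.2, ← hL _ a₂.2]
    ring
  simp only [Subfield.smul_def, smul_eq_mul, toLinearMap_apply] at key
  push_cast at key
  simp only [eval_comp, ← pow_mul, Nat.reduceMul, pow_zero, pow_one] at key ⊢
  linear_combination key - (hb₁ + hb₂) * eval (eval (eval (z ^ r ^ 3) f₂) f₁) f₀

end IsLinearized

theorem stmt7_general (r : ℕ)
    (Ω : Type*) [Field Ω]
    (K L : Subfield Ω) [Fintype K] [Fintype L]
    (hK : Fintype.card K = r) (hL : Fintype.card L = r ^ 3)
    (a₀ a₁ a₂ : Ω) (ha₀ : a₀ ∈ L) (ha₁ : a₁ ∈ L) (ha₂ : a₂ ∈ L)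
    (f₀ f₁ f₂ : Polynomial Ω)
    (hf₀ : ∃ (n : ℕ) (c : ℕ → Ω), (∀ i, c i ∈ K) ∧
      f₀ = ∑ i ∈ Finset.range n, C (c i) * X ^ (r ^ 3) ^ i)
    (hf₁ : ∃ (n : ℕ) (c : ℕ → Ω), (∀ i, c i ∈ K) ∧
      f₁ = ∑ i ∈ Finset.range n, C (c i) * X ^ (r ^ 3) ^ i)
    (hf₂ : ∃ (n : ℕ) (c : ℕ → Ω), (∀ i, c i ∈ K) ∧
      f₂ = ∑ i ∈ Finset.range n, C (c i) * X ^ (r ^ 3) ^ i)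
    (z : Ω) (hz : a₀ * f₀.eval z + a₁ * (f₁.eval z) ^ r + a₂ * (f₂.eval z) ^ r ^ 2 = 0) :
    a₀ ^ (1 + r + r ^ 2) * ((f₀.comp f₀).comp f₀).eval z +
      a₁ ^ (1 + r + r ^ 2) * ((f₁.comp f₁).comp f₁).eval (z ^ r ^ 3) +
      a₂ ^ (1 + r + r ^ 2) * ((f₂.comp f₂).comp f₂).eval (z ^ (r ^ 3) ^ 2) -
      (a₀ * a₁ ^ r * a₂ ^ r ^ 2 + (a₀ * a₁ ^ r * a₂ ^ r ^ 2) ^ r +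
          (a₀ * a₁ ^ r * a₂ ^ r ^ 2) ^ r ^ 2) *
        ((f₀.comp f₁).comp f₂).eval (z ^ r ^ 3) = 0 := by
  obtain ⟨p, n, _, hr⟩ := K.exists_expChar_card_eq_pow
  rw [hK] at hr
  have hLq {a : Ω} (ha : a ∈ L) : a ^ r ^ 3 = a := hL ▸ L.pow_card_eq_self ha
  exact IsLinearized.norm_relation hr (fun c hc => hK ▸ K.pow_card_eq_self hc)
    (hLq ha₀) (hLq ha₁) (hLq ha₂) hf₀ hf₁ hf₂ hz

/-- The case `m = 3`, `q = r³`: if `a₀ f₀(z) + a₁ f₁(z)^r + a₂ f₂(z)^{r²} = 0`, where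
`a₀, a₁, a₂ ∈ F_q` and `f₀, f₁, f₂` are `q`-linearized over `F_r`, then
`N(a₀)(f₀∘f₀∘f₀)(z) + N(a₁)(f₁∘f₁∘f₁)(z^q) + N(a₂)(f₂∘f₂∘f₂)(z^{q²})
  − Tr(a₀a₁^r a₂^{r²})(f₀∘f₁∘f₂)(z^q) = 0`. -/
theorem stmt7 (r : ℕ) (hr : IsPrimePow r)
    (Ω : Type*) [Field Ω] [IsAlgClosed Ω]
    (K L : Subfield Ω) [Fintype K] [Fintype L]
    (hK : Fintype.card K = r) (hL : Fintype.card L = r ^ 3)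
    (a₀ a₁ a₂ : Ω) (ha₀ : a₀ ∈ L) (ha₁ : a₁ ∈ L) (ha₂ : a₂ ∈ L)
    (f₀ f₁ f₂ : Polynomial Ω)
    (hf₀ : ∃ (n : ℕ) (c : ℕ → Ω), (∀ i, c i ∈ K) ∧
      f₀ = ∑ i ∈ Finset.range n, C (c i) * X ^ (r ^ 3) ^ i)
    (hf₁ : ∃ (n : ℕ) (c : ℕ → Ω), (∀ i, c i ∈ K) ∧
      f₁ = ∑ i ∈ Finset.range n, C (c i) * X ^ (r ^ 3) ^ i)
    (hf₂ : ∃ (n : ℕ) (c : ℕ → Ω), (∀ i, c i ∈ K) ∧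
      f₂ = ∑ i ∈ Finset.range n, C (c i) * X ^ (r ^ 3) ^ i)
    (z : Ω) (hz : a₀ * f₀.eval z + a₁ * (f₁.eval z) ^ r + a₂ * (f₂.eval z) ^ r ^ 2 = 0) :
    a₀ ^ (1 + r + r ^ 2) * ((f₀.comp f₀).comp f₀).eval z +
      a₁ ^ (1 + r + r ^ 2) * ((f₁.comp f₁).comp f₁).eval (z ^ r ^ 3) +
      a₂ ^ (1 + r + r ^ 2) * ((f₂.comp f₂).comp f₂).eval (z ^ (r ^ 3) ^ 2) -
      (a₀ * a₁ ^ r * a₂ ^ r ^ 2 + (a₀ * a₁ ^ r * a₂ ^ r ^ 2) ^ r +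
          (a₀ * a₁ ^ r * a₂ ^ r ^ 2) ^ r ^ 2) *
        ((f₀.comp f₁).comp f₂).eval (z ^ r ^ 3) = 0 :=
  stmt7_general r Ω K L hK hL a₀ a₁ a₂ ha₀ ha₁ ha₂ f₀ f₁ f₂ hf₀ hf₁ hf₂ z hz
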